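/- Let X be a rooted tree in which every vertex has at least one and at most K children, equipped with the uniformizing metric d_X with parameter ε > 0 and the measure μ with parameter β > log K. For every vertex x ∈ X and every radius r with d_X(x,0) = (1 - e^{-ε|x|})/ε ≤ r ≤ 2·diam X, one has μ(B(x,r)) ≃ r, with comparison constants depending only on K, ε and β. In particular, for x = 0 this holds for all r ≥ 0 up to 2·diam X. -/

import Mathlib

open MeasureTheory Set
open scoped ENNReal

/-- A rooted (metric) tree in which every vertex has at least one and at most `K`
children, equipped with the uniformizing metric with parameter `ε`
(`d_X(x,y) = ∫_{[x,y]} e^{-ε|z|} d|z|`, encoded in the definition `UnifTree.d` below) and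
the weighted measure `dμ(x) = e^{-β|x|} d|x|` (encoded by the axiom `μ_seg`).

The carrier `X` consists of all points of the metric graph (vertices and edge points);
`h x` is the distance `|x|` to the root in the unweighted (graph) metric, `le x y` means
that `x` lies on the geodesic from the root to `y`, `meet x y` is the largest common
ancestor of `x` and `y`, and `down x t` is the unique point below `x` at level `t`. -/
structure UnifTree (K : ℕ) (ε β : ℝ) where
  X : Type
  mX : MeasurableSpace X
  μ : @MeasureTheory.Measure X mX
  le : X → X → Prop
  root : X
  h : X → ℝ
  isVertex : X → Prop
  meet : X → X → X
  down : X → ℝ → X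
  -- `le` is a partial order with the root as least element, any two ancestors of a
  -- point being comparable
  le_refl : ∀ x, le x x
  le_trans : ∀ x y z, le x y → le y z → le x z
  le_antisymm : ∀ x y, le x y → le y x → x = y
  le_total_below : ∀ x y z, le x z → le y z → (le x y ∨ le y x)
  root_le : ∀ x, le root x
  -- `h` is the level function (graph distance to the root)
  h_root : h root = 0
  h_nonneg : ∀ x, 0 ≤ h x
  h_mono : ∀ x y, le x y → h x ≤ h y
  h_strict : ∀ x y, le x y → h x = h y → x = y
  -- `meet` is the largest common ancestor
  meet_le_left : ∀ x y, le (meet x y) x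
  meet_le_right : ∀ x y, le (meet x y) y
  meet_greatest : ∀ x y z, le z x → le z y → le z (meet x y)
  -- each point has a unique ancestor at every level `t ∈ [0, h x]`
  down_le : ∀ x t, 0 ≤ t → t ≤ h x → le (down x t) x
  h_down : ∀ x t, 0 ≤ t → t ≤ h x → h (down x t) = t
  down_eq : ∀ x y, le y x → down x (h y) = y
  -- vertices sit exactly at the integer levels
  vertex_level : ∀ x, isVertex x → ∃ n : ℕ, h x = n
  level_vertex : ∀ x (n : ℕ), (n : ℝ) ≤ h x → isVertex (down x n)
  root_vertex : isVertex root
  -- every vertex has at least one and at most `K` children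
  children_atLeastOne : ∀ x, isVertex x → ∃ y, isVertex y ∧ le x y ∧ h y = h x + 1
  children_finite : ∀ x, isVertex x → {y | isVertex y ∧ le x y ∧ h y = h x + 1}.Finite
  children_atMostK : ∀ x, isVertex x → {y | isVertex y ∧ le x y ∧ h y = h x + 1}.ncard ≤ K
  -- every point lies on an edge below some vertex
  on_edge : ∀ x, ∃ v, isVertex v ∧ le x v ∧ h v ≤ h x + 1
  -- the measure `μ` is given by `dμ(x) = e^{-β|x|} d|x|`: on each piece of a branch it
  -- is the weighted length measure
  μ_seg : ∀ x a b, 0 ≤ a → a ≤ b → b ≤ h x →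
    μ {y | le y x ∧ a ≤ h y ∧ h y ≤ b} = ENNReal.ofReal (∫ t in a..b, Real.exp (-β * t))

attribute [instance] UnifTree.mX

namespace UnifTree

variable {K : ℕ} {ε β : ℝ}

/-- The uniformizing metric `d_X(x,y) = ∫_{[x,y]} e^{-ε|z|} d|z|`: integrating the weight
`e^{-ε t}` along the geodesic from `x` to `y`, which passes through `meet x y`. -/
noncomputable def d (T : UnifTree K ε β) (x y : T.X) : ℝ :=
  (Real.exp (-ε * T.h (T.meet x y)) - Real.exp (-ε * T.h x)) / ε +
    (Real.exp (-ε * T.h (T.meet x y)) - Real.exp (-ε * T.h y)) / ε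

/-- The open ball with respect to the uniformizing metric. -/
def ball (T : UnifTree K ε β) (x : T.X) (r : ℝ) : Set T.X := {y | T.d x y < r}

/-- The downward directed half ball `F(x,r) = {y ∈ X : y ≥ x and d_X(x,y) < r}`. -/
def halfBall (T : UnifTree K ε β) (x : T.X) (r : ℝ) : Set T.X :=
  {y | T.le x y ∧ T.d x y < r}

/-- The diameter of `X` in the uniformizing metric. -/
noncomputable def diam (T : UnifTree K ε β) : ℝ :=
  sSup {s : ℝ | ∃ x y : T.X, s = T.d x y}

end UnifTree


open MeasureTheory Set

lemma one_sub_exp_neg_le (u : ℝ) : 1 - Real.exp (-u) ≤ u := by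
  have := Real.add_one_le_exp (-u); linarith

lemma one_sub_exp_neg_ge {u : ℝ} (hu : 0 ≤ u) :
    (1 - Real.exp (-1)) * min u 1 ≤ 1 - Real.exp (-u) := by
  rcases le_total u 1 with h | h
  · have hconv := convexOn_exp.2 (Set.mem_univ (0:ℝ)) (Set.mem_univ (-1:ℝ))
      (by linarith : (0:ℝ) ≤ 1 - u) hu (by ring)
    simp only [smul_eq_mul, mul_zero, mul_neg, mul_one, Real.exp_zero, zero_add] at hconv
    rw [min_eq_left h]
    nlinarith [Real.exp_pos (-1:ℝ)]
  · rw [min_eq_right h]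
    have : Real.exp (-u) ≤ Real.exp (-1) := Real.exp_le_exp.2 (by linarith)
    linarith

lemma min_mul_min_le {a b : ℝ} (ha : 0 ≤ a) (hb : 0 ≤ b) :
    min a 1 * min b 1 ≤ min (a * b) 1 := by
  apply le_min
  · exact mul_le_mul (min_le_left _ _) (min_le_left _ _) (le_min hb zero_le_one) ha
  · calc min a 1 * min b 1 ≤ 1 * 1 :=
        mul_le_mul (min_le_right _ _) (min_le_right _ _) (le_min hb zero_le_one) zero_le_one
      _ = 1 := one_mul 1

lemma integral_exp_neg_mul (β a b : ℝ) (hβ : β ≠ 0) :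
    ∫ t in a..b, Real.exp (-β * t) = (Real.exp (-β*a) - Real.exp (-β*b)) / β := by
  have h := intervalIntegral.integral_comp_mul_left (f := Real.exp) (a := a) (b := b)
    (c := -β) (neg_ne_zero.2 hβ)
  rw [h, integral_exp]
  rw [smul_eq_mul, inv_neg, div_eq_inv_mul]
  ring

namespace UnifTree

variable {K : ℕ} {ε β : ℝ} (T : UnifTree K ε β)

lemma one_le_K (T : UnifTree K ε β) : 1 ≤ K := by
  obtain ⟨y, hy⟩ := T.children_atLeastOne T.root T.root_vertex
  have hfin := T.children_finite T.root T.root_vertex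
  have h1 : 0 < {y | T.isVertex y ∧ T.le T.root y ∧ T.h y = T.h T.root + 1}.ncard :=
    (Set.ncard_pos hfin).2 ⟨y, hy⟩
  exact h1.trans_le (T.children_atMostK T.root T.root_vertex)

lemma meet_eq_right {x y : T.X} (h : T.le y x) : T.meet x y = y :=
  T.le_antisymm _ _ (T.meet_le_right x y) (T.meet_greatest x y y h (T.le_refl y))

lemma meet_eq_left {x y : T.X} (h : T.le x y) : T.meet x y = x :=
  T.le_antisymm _ _ (T.meet_le_left x y) (T.meet_greatest x y x (T.le_refl x) h)

lemma d_of_le {x y : T.X} (h : T.le y x) :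
    T.d x y = (Real.exp (-ε * T.h y) - Real.exp (-ε * T.h x)) / ε := by
  unfold d
  rw [meet_eq_right T h]
  ring

lemma d_of_ge {x y : T.X} (h : T.le x y) :
    T.d x y = (Real.exp (-ε * T.h x) - Real.exp (-ε * T.h y)) / ε := by
  unfold d
  rw [meet_eq_left T h]
  ring

lemma d_nonneg (hε : 0 < ε) (x y : T.X) : 0 ≤ T.d x y := by
  unfold d
  have h1 : T.h (T.meet x y) ≤ T.h x := T.h_mono _ _ (T.meet_le_left x y)
  have h2 : T.h (T.meet x y) ≤ T.h y := T.h_mono _ _ (T.meet_le_right x y)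
  have e1 : Real.exp (-ε * T.h x) ≤ Real.exp (-ε * T.h (T.meet x y)) :=
    Real.exp_le_exp.2 (by nlinarith)
  have e2 : Real.exp (-ε * T.h y) ≤ Real.exp (-ε * T.h (T.meet x y)) :=
    Real.exp_le_exp.2 (by nlinarith)
  exact add_nonneg (div_nonneg (sub_nonneg.2 e1) hε.le) (div_nonneg (sub_nonneg.2 e2) hε.le)

lemma exists_vertex_chain (v : T.X) (hv : T.isVertex v) (n : ℕ) :
    ∃ w, T.isVertex w ∧ T.le v w ∧ T.h w = T.h v + n := by
  induction n with
  | zero => exact ⟨v, hv, T.le_refl v, by simp⟩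
  | succ n ih =>
    obtain ⟨w, hw, hvw, hhw⟩ := ih
    obtain ⟨z, hz, hwz, hhz⟩ := T.children_atLeastOne w hw
    exact ⟨z, hz, T.le_trans _ _ _ hvw hwz, by rw [hhz, hhw]; push_cast; ring⟩

lemma exists_high (x : T.X) (N : ℝ) : ∃ y, T.le x y ∧ N ≤ T.h y := by
  obtain ⟨v, hv, hxv, -⟩ := T.on_edge x
  obtain ⟨w, -, hvw, hhw⟩ := exists_vertex_chain T v hv ⌈N⌉₊
  refine ⟨w, T.le_trans _ _ _ hxv hvw, ?_⟩
  have h1 := T.h_nonneg v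
  have h2 := Nat.le_ceil N
  linarith

lemma exists_vertex_above (z : T.X) (n : ℕ) (hz : T.h z ≤ n) :
    ∃ v, T.isVertex v ∧ T.h v = n ∧ T.le z v := by
  obtain ⟨y, hzy, hy⟩ := exists_high T z n
  have hn0 : (0:ℝ) ≤ n := Nat.cast_nonneg n
  have hd := T.down_le y n hn0 hy
  have hhd : T.h (T.down y n) = n := T.h_down y n hn0 hy
  refine ⟨T.down y n, T.level_vertex y n hy, hhd, ?_⟩
  rcases T.le_total_below _ _ _ hzy hd with h | h
  · exact h
  · have h1 := T.h_mono _ _ h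
    have h2 : T.h (T.down y n) = T.h z := _root_.le_antisymm h1 (by rw [hhd]; exact hz)
    have := T.h_strict _ _ h h2
    rw [← this]
    exact T.le_refl _

lemma level_card (n : ℕ) :
    {v : T.X | T.isVertex v ∧ T.h v = (n:ℝ)}.Finite ∧
      {v : T.X | T.isVertex v ∧ T.h v = (n:ℝ)}.ncard ≤ K^n := by
  induction n with
  | zero =>
    have hsub : {v : T.X | T.isVertex v ∧ T.h v = ((0:ℕ):ℝ)} ⊆ {T.root} := by
      rintro v ⟨hv, hhv⟩
      have : T.root = v :=
        T.h_strict T.root v (T.root_le v) (by rw [T.h_root, hhv]; norm_num)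
      simp [← this]
    refine ⟨(Set.finite_singleton T.root).subset hsub, ?_⟩
    simpa using (Set.ncard_le_ncard hsub (Set.finite_singleton T.root)).trans (by simp)
  | succ n ih =>
    classical
    obtain ⟨hfin, hcard⟩ := ih
    set s : Finset T.X := hfin.toFinset with hs
    set g : T.X → Finset T.X := fun p =>
      if hp : T.isVertex p then (T.children_finite p hp).toFinset else ∅ with hg
    have hsub : {v : T.X | T.isVertex v ∧ T.h v = ((n+1:ℕ):ℝ)} ⊆ ↑(s.biUnion g) := by
      rintro v ⟨hv, hhv⟩
      have hnle : (n:ℝ) ≤ T.h v := by rw [hhv]; push_cast; linarith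
      have hpv : T.le (T.down v n) v := T.down_le v n (Nat.cast_nonneg n) hnle
      have hph : T.h (T.down v n) = n := T.h_down v n (Nat.cast_nonneg n) hnle
      have hpvert : T.isVertex (T.down v n) := T.level_vertex v n hnle
      have hpmem : T.down v n ∈ s := by
        rw [hs, Set.Finite.mem_toFinset]; exact ⟨hpvert, hph⟩
      have hvmem : v ∈ g (T.down v n) := by
        rw [hg]
        simp only [hpvert, dif_pos]
        rw [Set.Finite.mem_toFinset]
        exact ⟨hv, hpv, by rw [hhv, hph]; push_cast; ring⟩
      exact Finset.mem_coe.2 (Finset.mem_biUnion.2 ⟨_, hpmem, hvmem⟩)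
    refine ⟨(s.biUnion g).finite_toSet.subset hsub, ?_⟩
    have hcard2 : ∀ p ∈ s, (g p).card ≤ K := by
      intro p hp
      rw [hs, Set.Finite.mem_toFinset] at hp
      rw [hg]
      simp only [hp.1, dif_pos]
      rw [← Set.ncard_eq_toFinset_card _ (T.children_finite p hp.1)]
      exact T.children_atMostK p hp.1
    calc {v : T.X | T.isVertex v ∧ T.h v = ((n+1:ℕ):ℝ)}.ncard
        ≤ (↑(s.biUnion g) : Set T.X).ncard :=
          Set.ncard_le_ncard hsub (s.biUnion g).finite_toSet
      _ = (s.biUnion g).card := Set.ncard_coe_finset _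
      _ ≤ ∑ p ∈ s, (g p).card := Finset.card_biUnion_le
      _ ≤ s.card * K := Finset.sum_le_card_nsmul s _ K hcard2
      _ ≤ K^n * K := by
          have : s.card ≤ K ^ n := by
            rw [hs, ← Set.ncard_eq_toFinset_card _ hfin]; exact hcard
          exact Nat.mul_le_mul_right K this
      _ = K^(n+1) := by ring

lemma slab_le (hβ : 0 < β) (n : ℕ) :
    T.μ {z | (n:ℝ) ≤ T.h z ∧ T.h z ≤ (n:ℝ)+1} ≤
      ENNReal.ofReal ((K:ℝ)^(n+1) * (Real.exp (-β*n) / β)) := by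
  classical
  obtain ⟨hfin, hcard⟩ := level_card T (n+1)
  set s := hfin.toFinset with hs
  have hcov : {z | (n:ℝ) ≤ T.h z ∧ T.h z ≤ (n:ℝ)+1} ⊆
      ⋃ v ∈ s, {z | T.le z v ∧ (n:ℝ) ≤ T.h z ∧ T.h z ≤ (n:ℝ)+1} := by
    rintro z ⟨h1, h2⟩
    obtain ⟨v, hvert, hh, hle⟩ := exists_vertex_above T z (n+1) (by push_cast; linarith)
    exact Set.mem_biUnion ((Set.Finite.mem_toFinset hfin).2 ⟨hvert, hh⟩) ⟨hle, h1, h2⟩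
  refine (measure_mono hcov).trans ((measure_biUnion_finset_le _ _).trans ?_)
  have hseg : ∀ v ∈ s, T.μ {z | T.le z v ∧ (n:ℝ) ≤ T.h z ∧ T.h z ≤ (n:ℝ)+1} =
      ENNReal.ofReal ((Real.exp (-β*n) - Real.exp (-β*((n:ℝ)+1)))/β) := by
    intro v hv
    rw [hs, Set.Finite.mem_toFinset] at hv
    rw [T.μ_seg v n ((n:ℝ)+1) (Nat.cast_nonneg n) (by linarith)
        (by rw [hv.2]; push_cast; norm_num),
      _root_.integral_exp_neg_mul β n ((n:ℝ)+1) hβ.ne']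
  rw [Finset.sum_congr rfl hseg, Finset.sum_const, nsmul_eq_mul]
  have hc0 : s.card ≤ K^(n+1) := by
    rw [hs, ← Set.ncard_eq_toFinset_card _ hfin]; exact hcard
  have hc1 : (s.card : ℝ≥0∞) ≤ ((K^(n+1) : ℕ) : ℝ≥0∞) := Nat.cast_le.2 hc0
  refine _root_.le_trans (mul_le_mul_left hc1 _) ?_
  rw [← ENNReal.ofReal_natCast, ← ENNReal.ofReal_mul (by positivity)]
  apply ENNReal.ofReal_le_ofReal
  push_cast
  have h1 : (0:ℝ) < Real.exp (-β*((n:ℝ)+1)) := Real.exp_pos _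
  gcongr
  linarith

lemma total_le (hβ : 0 < β) (hq : (K:ℝ) * Real.exp (-β) < 1) :
    T.μ Set.univ ≤ ENNReal.ofReal ((K:ℝ) / (β * (1 - (K:ℝ)*Real.exp (-β)))) := by
  have hcov : (Set.univ : Set T.X) ⊆ ⋃ n : ℕ, {z | (n:ℝ) ≤ T.h z ∧ T.h z ≤ (n:ℝ)+1} := by
    intro z _
    refine Set.mem_iUnion.2 ⟨⌊T.h z⌋₊, Nat.floor_le (T.h_nonneg z), ?_⟩
    have := Nat.lt_floor_add_one (T.h z); linarith
  refine (measure_mono hcov).trans ((measure_iUnion_le _).trans ?_)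
  refine (ENNReal.tsum_le_tsum (slab_le T hβ)).trans ?_
  set q := (K:ℝ) * Real.exp (-β) with hqdef
  have hq0 : 0 ≤ q := by positivity
  have hf : ∀ n:ℕ, (K:ℝ)^(n+1) * (Real.exp (-β*n)/β) = ((K:ℝ)/β) * q^n := by
    intro n
    rw [hqdef, mul_pow, mul_comm (-β) (n:ℝ), Real.exp_nat_mul]
    field_simp
    ring
  have hsumm : Summable (fun n : ℕ => ((K:ℝ)/β) * q^n) :=
    (summable_geometric_of_lt_one hq0 hq).mul_left _
  calc ∑' n:ℕ, ENNReal.ofReal ((K:ℝ)^(n+1) * (Real.exp (-β*n)/β))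
      = ∑' n:ℕ, ENNReal.ofReal (((K:ℝ)/β) * q^n) := by
        exact tsum_congr fun n => congrArg ENNReal.ofReal (hf n)
    _ = ENNReal.ofReal (∑' n:ℕ, ((K:ℝ)/β) * q^n) :=
        (ENNReal.ofReal_tsum_of_nonneg (fun n => by positivity) hsumm).symm
    _ = ENNReal.ofReal ((K:ℝ) / (β * (1 - q))) := by
        rw [tsum_mul_left, tsum_geometric_of_lt_one hq0 hq]
        congr 1
        field_simp
    _ ≤ ENNReal.ofReal ((K:ℝ) / (β * (1 - q))) := le_rfl

lemma d_le_two_div (hε : 0 < ε) (x y : T.X) : T.d x y ≤ 2/ε := by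
  unfold d
  have h0 : 0 ≤ T.h (T.meet x y) := T.h_nonneg _
  have e0 : Real.exp (-ε * T.h (T.meet x y)) ≤ 1 := by
    rw [← Real.exp_zero]
    exact Real.exp_le_exp.2 (by nlinarith)
  have e1 : 0 < Real.exp (-ε * T.h x) := Real.exp_pos _
  have e2 : 0 < Real.exp (-ε * T.h y) := Real.exp_pos _
  rw [← add_div, div_le_div_iff₀ hε hε]
  nlinarith

lemma lower_seg (hβ : 0 < β) (x : T.X) (r : ℝ) (y0 : T.X) (b : ℝ)
    (hb0 : 0 ≤ b) (hby : b ≤ T.h y0)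
    (hmem : ∀ z, T.le z y0 → 0 < T.h z → T.h z < b → T.d x z < r) :
    ENNReal.ofReal ((1 - Real.exp (-β*b))/β) ≤ T.μ (T.ball x r) := by
  have hy00 : 0 ≤ T.h y0 := T.h_nonneg y0
  have hseg := T.μ_seg y0 0 b le_rfl hb0 hby
  have h00 := T.μ_seg y0 0 0 le_rfl le_rfl hy00
  have hbb := T.μ_seg y0 b b hb0 le_rfl hby
  have hcover : {z | T.le z y0 ∧ 0 ≤ T.h z ∧ T.h z ≤ b} ⊆
      T.ball x r ∪ ({z | T.le z y0 ∧ 0 ≤ T.h z ∧ T.h z ≤ 0} ∪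
        {z | T.le z y0 ∧ b ≤ T.h z ∧ T.h z ≤ b}) := by
    rintro z ⟨hzy, hz0, hzb⟩
    rcases eq_or_lt_of_le hz0 with h0 | h0
    · exact Or.inr (Or.inl ⟨hzy, hz0, le_of_eq h0.symm⟩)
    rcases eq_or_lt_of_le hzb with hb' | hb'
    · exact Or.inr (Or.inr ⟨hzy, le_of_eq hb'.symm, le_of_eq hb'⟩)
    · exact Or.inl (hmem z hzy h0 hb')
  have hz1 : T.μ {z | T.le z y0 ∧ 0 ≤ T.h z ∧ T.h z ≤ 0} = 0 := by
    rw [h00, intervalIntegral.integral_same]; simp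
  have hz2 : T.μ {z | T.le z y0 ∧ b ≤ T.h z ∧ T.h z ≤ b} = 0 := by
    rw [hbb, intervalIntegral.integral_same]; simp
  calc ENNReal.ofReal ((1 - Real.exp (-β*b))/β)
      = T.μ {z | T.le z y0 ∧ 0 ≤ T.h z ∧ T.h z ≤ b} := by
        rw [hseg, _root_.integral_exp_neg_mul β 0 b hβ.ne']
        norm_num
    _ ≤ T.μ (T.ball x r ∪ ({z | T.le z y0 ∧ 0 ≤ T.h z ∧ T.h z ≤ 0} ∪
        {z | T.le z y0 ∧ b ≤ T.h z ∧ T.h z ≤ b})) := measure_mono hcover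
    _ ≤ T.μ (T.ball x r) + T.μ ({z | T.le z y0 ∧ 0 ≤ T.h z ∧ T.h z ≤ 0} ∪
        {z | T.le z y0 ∧ b ≤ T.h z ∧ T.h z ≤ b}) := measure_union_le _ _
    _ ≤ T.μ (T.ball x r) + (T.μ {z | T.le z y0 ∧ 0 ≤ T.h z ∧ T.h z ≤ 0} +
        T.μ {z | T.le z y0 ∧ b ≤ T.h z ∧ T.h z ≤ b}) :=
          add_le_add le_rfl (measure_union_le _ _)
    _ = T.μ (T.ball x r) := by rw [hz1, hz2]; simp

lemma ball_subset_level (hε : 0 < ε) (x : T.X) (r : ℝ)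
    (hρ : (1 - Real.exp (-ε * T.h x))/ε ≤ r) :
    ∀ y ∈ T.ball x r, 1 - Real.exp (-ε * T.h y) < ε * (2*r) := by
  intro y hy
  have hd : T.d x y < r := hy
  have hm : T.h (T.meet x y) ≤ T.h x := T.h_mono _ _ (T.meet_le_left x y)
  have hem : Real.exp (-ε * T.h x) ≤ Real.exp (-ε * T.h (T.meet x y)) :=
    Real.exp_le_exp.2 (by nlinarith)
  unfold d at hd
  rw [← add_div, div_lt_iff₀ hε] at hd
  rw [div_le_iff₀ hε] at hρ
  linarith

lemma upper_seg (hβ : 0 < β) (x : T.X) (r s : ℝ) (hs0 : 0 ≤ s) (hs1 : s ≤ 1)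
    (hsub : ∀ y ∈ T.ball x r, T.h y ≤ s) :
    T.μ (T.ball x r) ≤ ENNReal.ofReal ((K:ℝ) * s) := by
  classical
  obtain ⟨hfin, hcard⟩ := level_card T 1
  set t := hfin.toFinset with ht
  have hcov : T.ball x r ⊆ ⋃ v ∈ t, {z | T.le z v ∧ 0 ≤ T.h z ∧ T.h z ≤ s} := by
    intro y hy
    have hys := hsub y hy
    obtain ⟨v, hvert, hh, hle⟩ := exists_vertex_above T y 1 (by
      rw [Nat.cast_one]; linarith)
    exact Set.mem_biUnion ((Set.Finite.mem_toFinset hfin).2 ⟨hvert, hh⟩)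
      ⟨hle, T.h_nonneg y, hys⟩
  refine (measure_mono hcov).trans ((measure_biUnion_finset_le _ _).trans ?_)
  have hseg : ∀ v ∈ t, T.μ {z | T.le z v ∧ 0 ≤ T.h z ∧ T.h z ≤ s} =
      ENNReal.ofReal ((1 - Real.exp (-β*s))/β) := by
    intro v hv
    rw [ht, Set.Finite.mem_toFinset] at hv
    rw [T.μ_seg v 0 s le_rfl hs0 (by rw [hv.2, Nat.cast_one]; exact hs1),
      _root_.integral_exp_neg_mul β 0 s hβ.ne']
    norm_num
  rw [Finset.sum_congr rfl hseg, Finset.sum_const, nsmul_eq_mul]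
  have hc0 : t.card ≤ K := by
    rw [ht, ← Set.ncard_eq_toFinset_card _ hfin]
    simpa using hcard
  have hIle : (1 - Real.exp (-β*s))/β ≤ s := by
    rw [div_le_iff₀ hβ]
    have h1 := one_sub_exp_neg_le (β*s)
    rw [neg_mul] at *
    linarith
  have hI0 : 0 ≤ (1 - Real.exp (-β*s))/β := by
    have h2 : Real.exp (-β*s) ≤ 1 := by
      rw [← Real.exp_zero]; exact Real.exp_le_exp.2 (by nlinarith)
    apply div_nonneg (by linarith) hβ.le
  calc (t.card : ℝ≥0∞) * ENNReal.ofReal ((1 - Real.exp (-β*s))/β)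
      ≤ (K : ℝ≥0∞) * ENNReal.ofReal s :=
        mul_le_mul' (Nat.cast_le.2 hc0) (ENNReal.ofReal_le_ofReal hIle)
    _ = ENNReal.ofReal ((K:ℝ) * s) := by
        rw [← ENNReal.ofReal_natCast K, ← ENNReal.ofReal_mul (Nat.cast_nonneg K)]

lemma diam_le (hε : 0 < ε) : T.diam ≤ 2/ε := by
  apply Real.sSup_le
  · rintro u ⟨x, y, rfl⟩
    exact d_le_two_div T hε x y
  · positivity

end UnifTree

set_option maxHeartbeats 1000000 in
/-- for a rooted tree whose vertices have at least one and at most K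
children, with the uniformizing metric of parameter ε > 0 and the measure of parameter
β > log K, the balls of large radii `d_X(x,0) = (1 - e^{-ε|x|})/ε ≤ r ≤ 2·diam X`
satisfy `μ(B(x,r)) ≃ r`, with comparison constants depending only on K, ε, β.
In particular, for `x = 0` (when `(1 - e^{-ε|0|})/ε = 0`) this estimate holds
for all `0 ≤ r ≤ 2·diam X`. -/
theorem statement2 (K : ℕ) (ε β : ℝ) (hε : 0 < ε) (hβ : Real.log K < β) :
    ∃ C : ℝ, 0 < C ∧ ∀ (T : UnifTree K ε β) (x : T.X) (r : ℝ),
      (1 - Real.exp (-ε * T.h x)) / ε ≤ r → r ≤ 2 * T.diam →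
        ENNReal.ofReal (C⁻¹ * r) ≤ T.μ (T.ball x r) ∧
          T.μ (T.ball x r) ≤ ENNReal.ofReal (C * r) := by
  have hβ0 : 0 < β := by
    rcases Nat.eq_zero_or_pos K with h | h
    · simpa [h] using hβ
    · have : (0:ℝ) ≤ Real.log K := Real.log_nonneg (by exact_mod_cast h)
      linarith
  have he1 : Real.exp (-1:ℝ) < 1 := by
    rw [← Real.exp_zero]; exact Real.exp_lt_exp.2 (by norm_num)
  have heε : Real.exp (-ε) < 1 := by
    rw [← Real.exp_zero]; exact Real.exp_lt_exp.2 (by linarith)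
  set Kr : ℝ := max (K:ℝ) 1 with hKrdef
  have hKr1 : (1:ℝ) ≤ Kr := le_max_right _ _
  have hKr0 : (0:ℝ) < Kr := by linarith
  set q : ℝ := Kr * Real.exp (-β) with hqdef
  have hq0 : 0 ≤ q := by positivity
  have hq1 : q < 1 := by
    rcases Nat.eq_zero_or_pos K with h | h
    · have hk : Kr = 1 := by rw [hKrdef, h]; norm_num
      rw [hqdef, hk, one_mul, ← Real.exp_zero]
      exact Real.exp_lt_exp.2 (by linarith)
    · have hKrK : Kr = (K:ℝ) := max_eq_left (by exact_mod_cast h)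
      have hKpos : (0:ℝ) < K := by exact_mod_cast h
      have h2 : (K:ℝ) < Real.exp β := (Real.log_lt_iff_lt_exp hKpos).1 hβ
      have h3 : (K:ℝ) * Real.exp (-β) < Real.exp β * Real.exp (-β) :=
        mul_lt_mul_of_pos_right h2 (Real.exp_pos _)
      rw [hqdef, hKrK]
      calc (K:ℝ) * Real.exp (-β) < Real.exp β * Real.exp (-β) := h3
        _ = 1 := by rw [← Real.exp_add]; norm_num
  set cL : ℝ := (1 - Real.exp (-1)) * min (β/ε) 1 * (ε/β) with hcLdef
  have hcL0 : 0 < cL := by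
    rw [hcLdef]
    apply mul_pos (mul_pos (by linarith) (lt_min (by positivity) one_pos))
    positivity
  set cB : ℝ := ε/(8*β) with hcBdef
  have hcB0 : 0 < cB := by rw [hcBdef]; positivity
  set clow : ℝ := min cL cB with hclowdef
  have hclow0 : 0 < clow := by rw [hclowdef]; exact lt_min hcL0 hcB0
  set M : ℝ := Kr/(β*(1-q)) with hMdef
  have hM0 : 0 < M := by
    rw [hMdef]; exact div_pos hKr0 (mul_pos hβ0 (by linarith))
  set cup1 : ℝ := 2*Kr*ε/((1-Real.exp (-1))*min ε 1) with hcup1def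
  have hcup10 : 0 < cup1 := by
    rw [hcup1def]
    exact div_pos (by positivity) (mul_pos (by linarith) (lt_min hε one_pos))
  set cup2 : ℝ := 2*M*ε/(1-Real.exp (-ε)) with hcup2def
  have hcup20 : 0 < cup2 := by
    rw [hcup2def]; exact div_pos (by positivity) (by linarith)
  set C : ℝ := max (max cup1 cup2) clow⁻¹ with hCdef
  have hC0 : 0 < C := by
    rw [hCdef]
    exact lt_of_lt_of_le (inv_pos.2 hclow0) (le_max_right _ _)
  have hCinv : C⁻¹ ≤ clow := by
    rw [← inv_inv clow]
    apply inv_anti₀ (inv_pos.2 hclow0)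
    rw [hCdef]; exact le_max_right _ _
  refine ⟨C, hC0, ?_⟩
  intro T x r hr1 hr2
  have hK1 : 1 ≤ K := UnifTree.one_le_K T
  have hKrK : Kr = (K:ℝ) := by
    rw [hKrdef]; exact max_eq_left (by exact_mod_cast hK1)
  have ha0 : 0 < Real.exp (-ε * T.h x) := Real.exp_pos _
  have ha1 : Real.exp (-ε * T.h x) ≤ 1 := by
    rw [← Real.exp_zero]
    exact Real.exp_le_exp.2 (by nlinarith [T.h_nonneg x])
  have hr0 : 0 ≤ r := le_trans (div_nonneg (by linarith) hε.le) hr1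
  have hr4 : r ≤ 4/ε := by
    have hd := UnifTree.diam_le T hε
    calc r ≤ 2 * T.diam := hr2
      _ ≤ 2 * (2/ε) := by linarith
      _ = 4/ε := by ring
  have hεr1 : 1 - Real.exp (-ε * T.h x) ≤ ε * r := by
    rw [div_le_iff₀ hε] at hr1; linarith
  constructor
  · -- LOWER BOUND
    have hlow : ENNReal.ofReal (clow * r) ≤ T.μ (T.ball x r) := by
      rcases eq_or_lt_of_le hr0 with hr0' | hrpos
      · rw [← hr0']; simp
      rcases lt_or_ge (ε*r) (Real.exp (-ε * T.h x)) with hA | hB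
      · -- case A : small radius relative to x
        set S : ℝ := -Real.log (Real.exp (-ε * T.h x) - ε*r) / ε with hSdef
        have har : 0 < Real.exp (-ε * T.h x) - ε*r := by linarith
        have har1 : Real.exp (-ε * T.h x) - ε*r ≤ 1 := by nlinarith
        have h5 : ε * S = -Real.log (Real.exp (-ε * T.h x) - ε*r) := by
          rw [hSdef]; field_simp
        have hexpS : Real.exp (-(ε*S)) = Real.exp (-ε * T.h x) - ε*r := by
          rw [h5, neg_neg, Real.exp_log har]
        have hS0 : 0 ≤ S := by
          rw [hSdef]
          exact div_nonneg (neg_nonneg.2 (Real.log_nonpos har.le har1)) hε.le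
        obtain ⟨y0, hxy0, hy0⟩ := UnifTree.exists_high T x S
        have hmem : ∀ z, T.le z y0 → 0 < T.h z → T.h z < S → T.d x z < r := by
          intro z hzy0 hz0 hzS
          rcases T.le_total_below z x y0 hzy0 hxy0 with hzx | hxz
          · rw [UnifTree.d_of_le T hzx, div_lt_iff₀ hε]
            have he : Real.exp (-ε * T.h z) < 1 := by
              rw [← Real.exp_zero]; exact Real.exp_lt_exp.2 (by nlinarith)
            linarith
          · rw [UnifTree.d_of_ge T hxz, div_lt_iff₀ hε]
            have he : Real.exp (-(ε*S)) < Real.exp (-ε * T.h z) :=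
              Real.exp_lt_exp.2 (by nlinarith)
            rw [hexpS] at he
            linarith
        refine le_trans ?_ (UnifTree.lower_seg T hβ0 x r y0 S hS0 hy0 hmem)
        apply ENNReal.ofReal_le_ofReal
        rw [neg_mul, le_div_iff₀ hβ0]
        have hrS : ε*r ≤ 1 - Real.exp (-(ε*S)) := by rw [hexpS]; linarith
        have k1 : (1 - Real.exp (-1)) * min (β*S) 1 ≤ 1 - Real.exp (-(β*S)) :=
          one_sub_exp_neg_ge (by positivity)
        have k2 : min (β/ε) 1 * min (ε*S) 1 ≤ min (β*S) 1 := by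
          have hmm := min_mul_min_le (a := β/ε) (b := ε*S) (by positivity) (by positivity)
          have heq : β/ε * (ε*S) = β*S := by field_simp
          rwa [heq] at hmm
        have k3 : 1 - Real.exp (-(ε*S)) ≤ min (ε*S) 1 := by
          refine le_min (one_sub_exp_neg_le _) ?_
          have := Real.exp_pos (-(ε*S)); linarith
        have k4 : ε*r ≤ min (ε*S) 1 := le_trans hrS k3
        have hm10 : 0 ≤ min (β/ε) 1 := le_min (by positivity) zero_le_one
        have hA0 : (0:ℝ) ≤ 1 - Real.exp (-1) := by linarith
        have h6 : clow ≤ cL := by rw [hclowdef]; exact min_le_left _ _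
        calc clow * r * β ≤ cL * r * β :=
              mul_le_mul_of_nonneg_right
                (mul_le_mul_of_nonneg_right h6 hr0) hβ0.le
          _ = (1 - Real.exp (-1)) * (min (β/ε) 1 * (ε*r)) := by
              rw [hcLdef]; field_simp
          _ ≤ (1 - Real.exp (-1)) * (min (β/ε) 1 * min (ε*S) 1) :=
              mul_le_mul_of_nonneg_left (mul_le_mul_of_nonneg_left k4 hm10) hA0
          _ ≤ (1 - Real.exp (-1)) * min (β*S) 1 :=
              mul_le_mul_of_nonneg_left k2 hA0
          _ ≤ 1 - Real.exp (-(β*S)) := k1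
      · -- case B : big radius
        set Tc : ℝ := Real.log 2 / β with hTcdef
        have hTc0 : 0 ≤ Tc := by
          rw [hTcdef]; exact div_nonneg (Real.log_nonneg one_le_two) hβ0.le
        obtain ⟨y0, hxy0, hy0⟩ := UnifTree.exists_high T x Tc
        have hmem : ∀ z, T.le z y0 → 0 < T.h z → T.h z < Tc → T.d x z < r := by
          intro z hzy0 hz0 hzT
          rcases T.le_total_below z x y0 hzy0 hxy0 with hzx | hxz
          · rw [UnifTree.d_of_le T hzx, div_lt_iff₀ hε]
            have he : Real.exp (-ε * T.h z) < 1 := by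
              rw [← Real.exp_zero]; exact Real.exp_lt_exp.2 (by nlinarith)
            linarith
          · rw [UnifTree.d_of_ge T hxz, div_lt_iff₀ hε]
            have he : 0 < Real.exp (-ε * T.h z) := Real.exp_pos _
            linarith
        refine le_trans ?_ (UnifTree.lower_seg T hβ0 x r y0 Tc hTc0 hy0 hmem)
        apply ENNReal.ofReal_le_ofReal
        have hexpT : Real.exp (-β*Tc) = 1/2 := by
          have h7 : β * Tc = Real.log 2 := by rw [hTcdef]; field_simp
          rw [neg_mul, h7, Real.exp_neg, Real.exp_log (by norm_num)]
          norm_num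
        rw [hexpT]
        have h8 : clow ≤ cB := by rw [hclowdef]; exact min_le_right _ _
        calc clow * r ≤ cB * (4/ε) :=
              mul_le_mul h8 hr4 hr0 hcB0.le
          _ = (1 - 1/2)/β := by rw [hcBdef]; field_simp; ring
    exact le_trans (ENNReal.ofReal_le_ofReal
      (mul_le_mul_of_nonneg_right hCinv hr0)) hlow
  · -- UPPER BOUND
    have hlev := UnifTree.ball_subset_level T hε x r hr1
    rcases le_or_gt (ε*(2*r)) (1 - Real.exp (-ε)) with hsm | hlg
    · -- small radius
      have h2r0 : 0 ≤ ε*(2*r) := by positivity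
      have h1pos : 0 < 1 - ε*(2*r) := by linarith [Real.exp_pos (-ε)]
      set s : ℝ := -Real.log (1 - ε*(2*r)) / ε with hsdef
      have h9 : ε * s = -Real.log (1 - ε*(2*r)) := by rw [hsdef]; field_simp
      have hexps : Real.exp (-(ε*s)) = 1 - ε*(2*r) := by
        rw [h9, neg_neg, Real.exp_log h1pos]
      have hs0 : 0 ≤ s := by
        rw [hsdef]
        exact div_nonneg (neg_nonneg.2 (Real.log_nonpos h1pos.le (by linarith))) hε.le
      have hs1 : s ≤ 1 := by
        have h10 : Real.exp (-ε) ≤ Real.exp (-(ε*s)) := by rw [hexps]; linarith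
        have h11 := Real.exp_le_exp.1 h10
        have h12 : ε*s ≤ ε*1 := by linarith
        exact (mul_le_mul_iff_right₀ hε).1 h12
      have hsub : ∀ y ∈ T.ball x r, T.h y ≤ s := by
        intro y hy
        have h13 := hlev y hy
        have h14 : Real.exp (-(ε*s)) < Real.exp (-(ε*T.h y)) := by
          rw [hexps, neg_mul] at *
          linarith [h13]
        have h15 := Real.exp_lt_exp.1 h14
        have h16 : ε*T.h y ≤ ε*s := by linarith
        exact ((mul_le_mul_iff_right₀ hε).1 h16)
      refine (UnifTree.upper_seg T hβ0 x r s hs0 hs1 hsub).trans ?_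
      apply ENNReal.ofReal_le_ofReal
      have hk1 : (1 - Real.exp (-1)) * min (ε*s) 1 ≤ ε*(2*r) := by
        have h17 := one_sub_exp_neg_ge (u := ε*s) (by positivity)
        rw [hexps] at h17; linarith
      have hmin : min ε 1 * s ≤ min (ε*s) 1 := by
        apply le_min
        · exact mul_le_mul_of_nonneg_right (min_le_left _ _) hs0
        · calc min ε 1 * s ≤ 1 * s :=
              mul_le_mul_of_nonneg_right (min_le_right _ _) hs0
            _ = s := one_mul s
            _ ≤ 1 := hs1
      have hA0 : (0:ℝ) ≤ 1 - Real.exp (-1) := by linarith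
      have hs_le : (1 - Real.exp (-1)) * (min ε 1 * s) ≤ ε*(2*r) :=
        le_trans (mul_le_mul_of_nonneg_left hmin hA0) hk1
      have hCc : cup1 ≤ C := by
        rw [hCdef]; exact le_trans (le_max_left _ _) (le_max_left _ _)
      have hden : 0 < (1-Real.exp (-1)) * min ε 1 :=
        mul_pos (by linarith) (lt_min hε one_pos)
      have hKs : (K:ℝ) * s ≤ cup1 * r := by
        rw [hcup1def, hKrK, div_mul_eq_mul_div, le_div_iff₀ hden]
        have hK0 : (0:ℝ) ≤ K := Nat.cast_nonneg K
        have h18 := mul_le_mul_of_nonneg_left hs_le hK0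
        calc (K:ℝ) * s * ((1-Real.exp (-1)) * min ε 1)
            = (K:ℝ) * ((1-Real.exp (-1)) * (min ε 1 * s)) := by ring
          _ ≤ (K:ℝ) * (ε*(2*r)) := h18
          _ = 2*(K:ℝ)*ε*r := by ring
      calc (K:ℝ)*s ≤ cup1 * r := hKs
        _ ≤ C * r := mul_le_mul_of_nonneg_right hCc hr0
    · -- large radius
      refine le_trans (measure_mono (Set.subset_univ _)) ?_
      have hqK : (K:ℝ) * Real.exp (-β) < 1 := by
        rw [hqdef, hKrK] at hq1; exact hq1
      refine (UnifTree.total_le T hβ0 hqK).trans ?_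
      apply ENNReal.ofReal_le_ofReal
      have hMK : (K:ℝ)/(β*(1-(K:ℝ)*Real.exp (-β))) = M := by
        rw [hMdef, hqdef, hKrK]
      rw [hMK]
      have hrlg : (1 - Real.exp (-ε))/(2*ε) ≤ r := by
        rw [div_le_iff₀ (by positivity)]
        linarith
      have hCc : cup2 ≤ C := by
        rw [hCdef]; exact le_trans (le_max_right _ _) (le_max_left _ _)
      have hne1 : (1 - Real.exp (-ε)) ≠ 0 := ne_of_gt (by linarith)
      calc M = cup2 * ((1 - Real.exp (-ε))/(2*ε)) := by
            rw [hcup2def]; field_simp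
        _ ≤ cup2 * r := mul_le_mul_of_nonneg_left hrlg hcup20.le
        _ ≤ C * r := mul_le_mul_of_nonneg_right hCc hr0
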